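/- In the encoding ⟦M⟧_o of a linear lambda term M into BVQ structures, the set of free atom names of ⟦M⟧_o occurring positively is exactly the set of free variables of M, and each such name occurs exactly once. -/

import Mathlib

/-- Untyped lambda terms with named variables (names are natural numbers). -/
inductive Lam : Type
  | var : ℕ → Lam
  | lam : ℕ → Lam → Lam
  | app : Lam → Lam → Lam
deriving DecidableEq

namespace Lam

/-- Number of free occurrences of the variable `x` in a term. -/
def count (x : ℕ) : Lam → ℕ
  | var y => if y = x then 1 else 0
  | lam y M => if y = x then 0 else count x M
  | app M N => count x M + count x N

/-- Free variables of a term. -/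
def fv : Lam → Finset ℕ
  | var x => {x}
  | lam x M => fv M \ {x}
  | app M N => fv M ∪ fv N

/-- Bound variables of a term. -/
def bv : Lam → Finset ℕ
  | var _ => ∅
  | lam x M => insert x (bv M)
  | app M N => bv M ∪ bv N

/-- Substitution of `N` for the free occurrences of `x`. -/
def subst (x : ℕ) (N : Lam) : Lam → Lam
  | var y => if y = x then N else var y
  | lam y M => if y = x then lam y M else lam y (subst x N M)
  | app M P => app (subst x N M) (subst x N P)

/-- Size of a term: number of nodes of the syntax tree. -/
def size : Lam → ℕ
  | var _ => 1
  | lam _ M => 1 + size M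
  | app M N => 1 + size M + size N

/-- Number of lambda-abstractions in a term. -/
def numLam : Lam → ℕ
  | var _ => 0
  | lam _ M => 1 + numLam M
  | app M N => numLam M + numLam N

/-- Number of applications in a term. -/
def numApp : Lam → ℕ
  | var _ => 0
  | lam _ M => numApp M
  | app M N => 1 + numApp M + numApp N

/-- Number of variable occurrences in a term. -/
def numVar : Lam → ℕ
  | var _ => 1
  | lam _ M => numVar M
  | app M N => numVar M + numVar N

/-- `Linear X M` : `M` is a linear lambda term whose free variables are exactly `X`,
each occurring exactly once. -/
inductive Linear : Finset ℕ → Lam → Prop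
  | var (x : ℕ) : Linear {x} (var x)
  | lam {X : Finset ℕ} {x : ℕ} {M : Lam} (hx : x ∉ X) :
      Linear (insert x X) M → Linear X (lam x M)
  | app {X Y : Finset ℕ} {M N : Lam} (h : Disjoint X Y) :
      Linear X M → Linear Y N → Linear (X ∪ Y) (app M N)

/-- One-step beta-reduction: the contextual closure of `(λx.M)N → M[N/x]`. -/
inductive Step : Lam → Lam → Prop
  | beta (x : ℕ) (M N : Lam) : Step (app (lam x M) N) (subst x N M)
  | lam (x : ℕ) {M N : Lam} : Step M N → Step (lam x M) (lam x N)
  | appL {M N : Lam} (P : Lam) : Step M N → Step (app M P) (app N P)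
  | appR (P : Lam) {M N : Lam} : Step M N → Step (app P M) (app P N)

/-- The operational semantics `⇒` of the linear lambda calculus: reflexivity,
beta, transitivity, and congruence under abstraction and both application positions. -/
inductive Red : Lam → Lam → Prop
  | refl (M : Lam) : Red M M
  | beta (x : ℕ) (M N : Lam) : Red (app (lam x M) N) (subst x N M)
  | trans {M P N : Lam} : Red M P → Red P N → Red M N
  | lam (x : ℕ) {M N : Lam} : Red M N → Red (lam x M) (lam x N)
  | appL {M N : Lam} (P : Lam) : Red M N → Red (app M P) (app N P)
  | appR (P : Lam) {M N : Lam} : Red M N → Red (app P M) (app P N)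

/-- Alpha-equivalence of lambda terms. -/
inductive Alpha : Lam → Lam → Prop
  | var (x : ℕ) : Alpha (var x) (var x)
  | app {M M' N N' : Lam} : Alpha M M' → Alpha N N' → Alpha (app M N) (app M' N')
  | lam {x y : ℕ} {M M' : Lam} (z : ℕ)
      (hz : z ∉ fv M ∪ fv M' ∪ bv M ∪ bv M') :
      Alpha (subst x (var z) M) (subst y (var z) M') → Alpha (lam x M) (lam y M')

end Lam

/-- Structures of system BVQ: atoms and their negations, the unit, par, seq,
copar, and the self-dual quantifier binder `sdq`. -/
inductive Str : Type
  | one : Str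
  | pos : ℕ → Str
  | neg : ℕ → Str
  | par : Str → Str → Str
  | seq : Str → Str → Str
  | copar : Str → Str → Str
  | sdq : ℕ → Str → Str

namespace Str

/-- Number of free negative occurrences of atom name `a` in a structure. -/
def negCount (a : ℕ) : Str → ℕ
  | one => 0
  | pos _ => 0
  | neg b => if b = a then 1 else 0
  | par R T => negCount a R + negCount a T
  | seq R T => negCount a R + negCount a T
  | copar R T => negCount a R + negCount a T
  | sdq b R => if b = a then 0 else negCount a R

/-- Number of free positive occurrences of atom name `a` in a structure. -/
def posCount (a : ℕ) : Str → ℕ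
  | one => 0
  | pos b => if b = a then 1 else 0
  | neg _ => 0
  | par R T => posCount a R + posCount a T
  | seq R T => posCount a R + posCount a T
  | copar R T => posCount a R + posCount a T
  | sdq b R => if b = a then 0 else posCount a R

/-- Size of a structure: atoms, units, binary connectives and binders each count one. -/
def ssize : Str → ℕ
  | one => 1
  | pos _ => 1
  | neg _ => 1
  | par R T => 1 + ssize R + ssize T
  | seq R T => 1 + ssize R + ssize T
  | copar R T => 1 + ssize R + ssize T
  | sdq _ R => 1 + ssize R

end Str

/-- The encoding `⟦M⟧_o` of linear lambda terms into BVQ structures.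
Lambda variables `x` are coded by the even atom name `2*x`; fresh channel
names are odd, generated from a counter `c` (the returned counter bounds the
names used so far).  The clauses are:
`⟦x⟧_o = ⟨x ; ō⟩`, `⟦λx.M⟧_o = ∀x.⟦M⟧_o`,
`⟦M N⟧_o = ∃p.[⟦M⟧_p ; ∃q.⟦N⟧_q ; ⟨p ; ō⟩]` with `p`, `q` fresh. -/
def enc : Lam → ℕ → ℕ → Str × ℕ
  | .var x, o, c => (.seq (.pos (2*x)) (.neg o), c)
  | .lam x M, o, c =>
      let r := enc M o c
      (.sdq (2*x) r.1, r.2)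
  | .app M N, o, c =>
      let p := 2*c+1
      let q := 2*c+3
      let r1 := enc M p (c+2)
      let r2 := enc N q r1.2
      (.sdq p (.par r1.1 (.par (.sdq q r2.1) (.seq (.pos p) (.neg o)))), r2.2)

/-! The encoding puts a positive atom `2 * x` exactly at each occurrence of the variable `x`;
every other positive atom carries an odd channel name, bound by the `∃` that introduces it.
So the free positive count of `2 * x` in `⟦M⟧_o` is the number of free occurrences of `x`
in `M`, which linearity makes `1` or `0`, and no odd name occurs free positively at all. -/

namespace Lam

theorem Linear.fv_eq {X : Finset ℕ} {M : Lam} (hM : Linear X M) : M.fv = X := by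
  induction hM with
  | var x => rfl
  | lam hx _ ih => rw [fv, ih, Finset.sdiff_singleton_eq_erase, Finset.erase_insert hx]
  | app _ _ _ ihM ihN => rw [fv, ihM, ihN]

theorem Linear.count_eq {X : Finset ℕ} {M : Lam} (hM : Linear X M) (x : ℕ) :
    M.count x = if x ∈ X then 1 else 0 := by
  induction hM with
  | var y => simp only [count, Finset.mem_singleton, eq_comm]
  | @lam X y M hy _ ih =>
    rw [count, ih]
    by_cases hxy : y = x
    · subst hxy
      simp [hy]
    · simp [hxy, Ne.symm hxy]
  | @app X Y M N hXY _ _ ihM ihN =>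
    by_cases hX : x ∈ X
    · simp [count, ihM, ihN, hX, Finset.disjoint_left.mp hXY hX]
    · simp [count, ihM, ihN, hX]

end Lam

theorem posCount_enc_two_mul (M : Lam) (x o c : ℕ) :
    Str.posCount (2 * x) (enc M o c).1 = M.count x := by
  induction M generalizing o c with
  | var y => simp [enc, Str.posCount, Lam.count]
  | lam y M ih => simp [enc, Str.posCount, Lam.count, ih]
  | app M N ihM ihN =>
    have hp : 2 * c + 1 ≠ 2 * x := by omega
    have hq : 2 * c + 3 ≠ 2 * x := by omega
    simp [enc, Str.posCount, Lam.count, ihM, ihN, hp, hq]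

theorem posCount_enc_of_odd (M : Lam) {a : ℕ} (ha : Odd a) (o c : ℕ) :
    Str.posCount a (enc M o c).1 = 0 := by
  induction M generalizing o c with
  | var y =>
    have : 2 * y ≠ a := fun h => Nat.not_even_iff_odd.mpr ha (h ▸ even_two_mul y)
    simp [enc, Str.posCount, this]
  | lam y M ih => simp [enc, Str.posCount, ih]
  | app M N ihM ihN => simp [enc, Str.posCount, ihM, ihN]

open Lam in
theorem enc_pos_free_general {X : Finset ℕ} {M : Lam} {o c : ℕ}
    (hM : Linear X M) :
    (∀ x ∈ fv M, Str.posCount (2 * x) (enc M o c).1 = 1) ∧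
    (∀ a : ℕ, (¬ ∃ x ∈ fv M, a = 2 * x) → Str.posCount a (enc M o c).1 = 0) := by
  rw [hM.fv_eq]
  refine ⟨fun x hx => by rw [posCount_enc_two_mul, hM.count_eq, if_pos hx], fun a ha => ?_⟩
  rcases Nat.even_or_odd' a with ⟨x, rfl | rfl⟩
  · have hx : x ∉ X := fun hx => ha ⟨x, hx, rfl⟩
    rw [posCount_enc_two_mul, hM.count_eq, if_neg hx]
  · exact posCount_enc_of_odd M (odd_two_mul_add_one x) o c

open Lam in
/-- The free atom names occurring positively in `⟦M⟧_o` are exactly the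
(codes of the) free variables of `M`, each occurring exactly once. -/
theorem enc_pos_free {X : Finset ℕ} {M : Lam} {o c : ℕ}
    (hM : Linear X M) (ho : Odd o) (hc : o < 2 * c + 1) :
    (∀ x ∈ fv M, Str.posCount (2 * x) (enc M o c).1 = 1) ∧
    (∀ a : ℕ, (¬ ∃ x ∈ fv M, a = 2 * x) → Str.posCount a (enc M o c).1 = 0) :=
  enc_pos_free_general hM
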